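/- Let K, M be positive integers, let λ ≥ 0, and let W be a symmetric positive semi-definite real M×M matrix with entries w_ij and row sums d_ii = Σ_j w_ij. Let φ₁,…,φ_M be real-valued functions differentiable on a neighborhood of Δ^K satisfying the smoothness condition ‖∇φ_i(c') − ∇φ_i(c) + 2λ d_ii (c' − c)‖_∞ ≤ L₂ ‖c' − c‖₁ for all c, c' ∈ Δ^K. Define F(c₁,…,c_M) = Σ_{i=1}^M φ_i(c_i) + λ(Σ_i d_ii ⟨c_i, c_i⟩ − Σ_{i,j} w_ij ⟨c_i, c_j⟩). Let c₁ᵗ,…,c_Mᵗ ∈ Δ^K each have all coordinates strictly positive, let 0 < η < 2/L₂, and set c_i^{t+1} = MD(c_iᵗ, ∇φ_i(c_iᵗ) + 2λ(d_ii c_iᵗ − Σ_j w_ij c_jᵗ), η) for each i. Then F(c₁^{t+1},…,c_M^{t+1}) − F(c₁ᵗ,…,c_Mᵗ) ≤ −(η/2)(1 − (L₂/2)η) Σ_{i=1}^M ‖(c_iᵗ − c_i^{t+1})/η‖₁². -/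

import Mathlib

/-!
Write `δᵢ = cᵢᵗ⁺¹ - cᵢᵗ` and `gᵢ` for the mirror-descent gradients. Each client's term
`φᵢ c + λ dᵢ ⟨c, c⟩` has an `ℓ¹ → ℓ∞` Lipschitz gradient, so the descent lemma bounds its change by
the linearization plus `L₂/2 ‖δᵢ‖₁²`. The coupling term `-λ ∑ i j, wᵢⱼ ⟨cᵢ, cⱼ⟩` is concave because
`W` is positive semidefinite, so it is bounded by its linearization. The linear parts add up to
`∑ ⟨gᵢ, δᵢ⟩`, and the explicit entropic step together with Pinsker's inequality in the symmetrized
form `‖a - b‖₁² ≤ ∑ (a - b)(log a - log b)` gives `⟨gᵢ, δᵢ⟩ ≤ -‖δᵢ‖₁² / η`. Hence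
`F(cᵗ⁺¹) - F(cᵗ) ≤ (L₂/2 - 1/η) ∑ ‖δᵢ‖₁²`, which is at most the claimed bound once `L₂ η < 2`.
-/

open Matrix Finset

lemma Real.two_mul_sq_le_mul_log_sub_log {x : ℝ} (hx : |x| < 1) :
    2 * x ^ 2 ≤ x * (Real.log (1 + x) - Real.log (1 - x)) := by
  have hsum := (Real.hasSum_log_sub_log_of_abs_lt_one hx).mul_left x
  have hterm : ∀ k : ℕ, x * (2 * (1 / (2 * k + 1)) * x ^ (2 * k + 1))
      = 2 / (2 * k + 1) * (x ^ (k + 1)) ^ 2 := fun k => by ring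
  calc 2 * x ^ 2 = x * (2 * (1 / (2 * (0 : ℕ) + 1)) * x ^ (2 * 0 + 1)) := by simp; ring
    _ ≤ _ := le_hasSum hsum 0 fun k _ => by rw [hterm]; positivity

lemma Real.two_mul_sq_sub_div_add_le_mul_log_sub_log {a b : ℝ} (ha : 0 < a) (hb : 0 < b) :
    2 * (a - b) ^ 2 / (a + b) ≤ (a - b) * (Real.log a - Real.log b) := by
  -- Substitute `x = (a - b) / (a + b)`, for which `(1 + x) / (1 - x) = a / b`.
  have hab : 0 < a + b := by positivity
  have hx : |(a - b) / (a + b)| < 1 := by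
    rw [abs_div, abs_of_pos hab, div_lt_one hab, abs_lt]; constructor <;> linarith
  have h1 : 1 + (a - b) / (a + b) = 2 * a / (a + b) := by field_simp; ring
  have h2 : 1 - (a - b) / (a + b) = 2 * b / (a + b) := by field_simp; ring
  have hlog : Real.log (2 * a / (a + b)) - Real.log (2 * b / (a + b))
      = Real.log a - Real.log b := by
    rw [Real.log_div (by positivity) hab.ne', Real.log_div (by positivity) hab.ne',
      Real.log_mul two_ne_zero ha.ne', Real.log_mul two_ne_zero hb.ne']
    ring
  have key := Real.two_mul_sq_le_mul_log_sub_log hx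
  rw [h1, h2, hlog] at key
  rw [div_le_iff₀ hab]
  rw [div_pow, ← mul_div_assoc, div_le_iff₀ (by positivity)] at key
  convert key using 1
  field_simp

lemma sq_sum_abs_sub_le_sum_mul_log_sub_log {ι : Type*} [Fintype ι] {a b : ι → ℝ}
    (ha : ∀ i, 0 < a i) (hb : ∀ i, 0 < b i) (ha1 : ∑ i, a i = 1) (hb1 : ∑ i, b i = 1) :
    (∑ i, |a i - b i|) ^ 2 ≤ ∑ i, (a i - b i) * (Real.log (a i) - Real.log (b i)) := by
  have hab : ∀ i ∈ univ, 0 < a i + b i := fun i _ => add_pos (ha i) (hb i)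
  have htitu := sq_sum_div_le_sum_sq_div univ (fun i => |a i - b i|) hab
  rw [sum_add_distrib, ha1, hb1, one_add_one_eq_two, div_le_iff₀ two_pos, sum_mul] at htitu
  refine htitu.trans (sum_le_sum fun i _ => ?_)
  rw [sq_abs, div_mul_eq_mul_div, mul_comm]
  exact Real.two_mul_sq_sub_div_add_le_mul_log_sub_log (ha i) (hb i)

noncomputable def mirrorDescentStep {ι : Type*} [Fintype ι] (c g : ι → ℝ) (η : ℝ) : ι → ℝ :=
  fun k => c k * Real.exp (-η * g k) / ∑ l, c l * Real.exp (-η * g l)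

section mirrorDescentStep

variable {ι : Type*} [Fintype ι] {c : ι → ℝ} (g : ι → ℝ) (η : ℝ)

lemma sum_mul_exp_pos (hc : ∀ k, 0 < c k) [Nonempty ι] :
    0 < ∑ l, c l * Real.exp (-η * g l) :=
  sum_pos (fun l _ => mul_pos (hc l) (Real.exp_pos _)) univ_nonempty

lemma mirrorDescentStep_pos (hc : ∀ k, 0 < c k) (k : ι) : 0 < mirrorDescentStep c g η k :=
  have : Nonempty ι := ⟨k⟩
  div_pos (mul_pos (hc k) (Real.exp_pos _)) (sum_mul_exp_pos g η hc)

lemma sum_mirrorDescentStep (hc : ∀ k, 0 < c k) [Nonempty ι] :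
    ∑ k, mirrorDescentStep c g η k = 1 := by
  simp only [mirrorDescentStep]
  rw [← sum_div, div_self (sum_mul_exp_pos g η hc).ne']

lemma mirrorDescentStep_mem_stdSimplex (hc : ∀ k, 0 < c k) (hc1 : ∑ k, c k = 1) :
    mirrorDescentStep c g η ∈ stdSimplex ℝ ι :=
  have : Nonempty ι := univ_nonempty_iff.1 (nonempty_of_sum_ne_zero (hc1 ▸ one_ne_zero))
  ⟨fun k => (mirrorDescentStep_pos g η hc k).le, sum_mirrorDescentStep g η hc⟩

lemma log_mirrorDescentStep_sub_log (hc : ∀ k, 0 < c k) (k : ι) :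
    Real.log (mirrorDescentStep c g η k) - Real.log (c k)
      = -η * g k - Real.log (∑ l, c l * Real.exp (-η * g l)) := by
  have : Nonempty ι := ⟨k⟩
  rw [mirrorDescentStep, Real.log_div (mul_pos (hc k) (Real.exp_pos _)).ne'
    (sum_mul_exp_pos g η hc).ne', Real.log_mul (hc k).ne' (Real.exp_pos _).ne', Real.log_exp]
  ring

-- The normalizer drops out because both iterates are probability vectors; then Pinsker.
lemma dotProduct_mirrorDescentStep_sub_le (hc : ∀ k, 0 < c k) (hc1 : ∑ k, c k = 1)
    (hη : 0 < η) :
    g ⬝ᵥ (mirrorDescentStep c g η - c)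
      ≤ -(∑ k, |mirrorDescentStep c g η k - c k|) ^ 2 / η := by
  have : Nonempty ι := univ_nonempty_iff.1 (nonempty_of_sum_ne_zero (hc1 ▸ one_ne_zero))
  set c' := mirrorDescentStep c g η
  set Z := ∑ l, c l * Real.exp (-η * g l)
  have hsum : ∑ k, (c' k - c k) = 0 := by
    rw [sum_sub_distrib, sum_mirrorDescentStep g η hc, hc1, sub_self]
  have hg : ∀ k, g k = -(Real.log (c' k) - Real.log (c k) + Real.log Z) / η := fun k => by
    rw [log_mirrorDescentStep_sub_log g η hc k, sub_add_cancel, neg_mul, neg_neg,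
      mul_div_cancel_left₀ _ hη.ne']
  have hpinsker := sq_sum_abs_sub_le_sum_mul_log_sub_log
    (mirrorDescentStep_pos g η hc) hc (sum_mirrorDescentStep g η hc) hc1
  calc g ⬝ᵥ (c' - c)
      = -(∑ k, (c' k - c k) * (Real.log (c' k) - Real.log (c k))
          + Real.log Z * ∑ k, (c' k - c k)) / η := by
        simp only [dotProduct, Pi.sub_apply, hg, mul_sum, ← sum_add_distrib, sum_div,
          ← sum_neg_distrib]
        exact sum_congr rfl fun k _ => by ring
    _ ≤ _ := by
        rw [hsum, mul_zero, add_zero]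
        gcongr

end mirrorDescentStep

lemma dotProduct_le_iSup_abs_mul_sum_abs {ι : Type*} [Fintype ι] (u v : ι → ℝ) :
    u ⬝ᵥ v ≤ (⨆ k, |u k|) * ∑ k, |v k| := by
  rw [mul_sum]
  refine sum_le_sum fun k _ => ?_
  calc u k * v k ≤ |u k| * |v k| := by rw [← abs_mul]; exact le_abs_self _
    _ ≤ (⨆ k, |u k|) * |v k| :=
      mul_le_mul_of_nonneg_right (le_ciSup (f := fun k => |u k|) (Set.finite_range _).bddAbove k)
        (abs_nonneg _)

lemma sub_le_deriv_add_of_deriv_sub_le {g g' : ℝ → ℝ} {C : ℝ}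
    (hg : ∀ t ∈ Set.Icc (0 : ℝ) 1, HasDerivAt g (g' t) t)
    (hg' : ∀ t ∈ Set.Icc (0 : ℝ) 1, g' t - g' 0 ≤ C * t) :
    g 1 - g 0 ≤ g' 0 + C / 2 := by
  set h : ℝ → ℝ := fun t => g t - g' 0 * t - C / 2 * t ^ 2
  have hh : ∀ t ∈ Set.Icc (0 : ℝ) 1, HasDerivAt h (g' t - g' 0 - C * t) t := fun t ht => by
    refine (((hg t ht).fun_sub ((hasDerivAt_id' t).const_mul (g' 0))).fun_sub
      ((hasDerivAt_pow 2 t).const_mul (C / 2))).congr_deriv ?_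
    ring
  have hanti : AntitoneOn h (Set.Icc 0 1) := by
    refine antitoneOn_of_hasDerivWithinAt_nonpos (convex_Icc 0 1)
      (fun t ht => (hh t ht).continuousAt.continuousWithinAt)
      (fun t ht => (hh t (interior_subset ht)).hasDerivWithinAt) fun t ht => ?_
    linarith [hg' t (interior_subset ht)]
  have := hanti (Set.left_mem_Icc.2 zero_le_one) (Set.right_mem_Icc.2 zero_le_one) zero_le_one
  simp only [h] at this
  linarith

lemma Convex.image_sub_le_of_fderiv_sub_le {E : Type*} [NormedAddCommGroup E]
    [NormedSpace ℝ E] {s : Set E} (hs : Convex ℝ s) {f : E → ℝ} {f' : E → E →L[ℝ] ℝ}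
    (hf : ∀ x ∈ s, HasFDerivAt f (f' x) x) (N : Seminorm ℝ E) {L : ℝ}
    (hL : ∀ x ∈ s, ∀ y ∈ s, (f' y - f' x) (y - x) ≤ L * N (y - x) ^ 2)
    {x y : E} (hx : x ∈ s) (hy : y ∈ s) :
    f y - f x ≤ f' x (y - x) + L / 2 * N (y - x) ^ 2 := by
  have hmem : ∀ t ∈ Set.Icc (0 : ℝ) 1, x + t • (y - x) ∈ s := fun t ht =>
    hs.add_smul_sub_mem hx hy ht
  have hderiv : ∀ t ∈ Set.Icc (0 : ℝ) 1,
      HasDerivAt (fun t => f (x + t • (y - x))) (f' (x + t • (y - x)) (y - x)) t :=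
    fun t ht => by
      have hpath : HasDerivAt (fun t : ℝ => x + t • (y - x)) (y - x) t := by
        simpa using ((hasDerivAt_id t).smul_const (y - x)).const_add x
      exact (hf _ (hmem t ht)).comp_hasDerivAt t hpath
  have key := sub_le_deriv_add_of_deriv_sub_le hderiv (C := L * N (y - x) ^ 2) fun t ht => by
    rcases ht.1.eq_or_lt with rfl | ht0
    · simp
    have h := hL x hx _ (hmem t ht)
    rw [add_sub_cancel_left, ContinuousLinearMap.map_smul, map_smul_eq_mul N,
      Real.norm_of_nonneg ht.1, smul_eq_mul] at h
    simp only [zero_smul, add_zero, ← _root_.sub_apply]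
    nlinarith
  simp only [one_smul, zero_smul, add_zero, add_sub_cancel] at key
  linarith

def l1Seminorm (ι : Type*) [Fintype ι] : Seminorm ℝ (ι → ℝ) :=
  Seminorm.of (fun v => ∑ i, |v i|)
    (fun x y => (sum_le_sum fun i _ => abs_add_le (x i) (y i)).trans_eq sum_add_distrib)
    (fun a x => by simp [abs_mul, mul_sum])

@[simp]
lemma l1Seminorm_apply {ι : Type*} [Fintype ι] (v : ι → ℝ) : l1Seminorm ι v = ∑ i, |v i| := rfl

lemma ContinuousLinearMap.apply_eq_sum_mul_apply_single {ι : Type*} [Fintype ι] [DecidableEq ι]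
    (ℓ : (ι → ℝ) →L[ℝ] ℝ) (v : ι → ℝ) : ℓ v = ∑ k, v k * ℓ (Pi.single k 1) := by
  conv_lhs => rw [← univ_sum_single v]
  rw [map_sum]
  refine sum_congr rfl fun k _ => ?_
  rw [← smul_eq_mul, ← map_smul]
  congr 1
  ext j
  simp [Pi.single_apply]

lemma add_half_mul_dotProduct_self_sub_le {ι : Type*} [Fintype ι] [DecidableEq ι]
    {s : Set (ι → ℝ)} (hs : Convex ℝ s) {φ : (ι → ℝ) → ℝ}
    (hφ : ∀ c ∈ s, DifferentiableAt ℝ φ c) {A L : ℝ}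
    (hsmooth : ∀ c ∈ s, ∀ c' ∈ s,
      (⨆ k, |fderiv ℝ φ c' (Pi.single k 1) - fderiv ℝ φ c (Pi.single k 1) + A * (c' k - c k)|)
        ≤ L * ∑ k, |c' k - c k|)
    {c c' : ι → ℝ} (hc : c ∈ s) (hc' : c' ∈ s) :
    φ c' + A / 2 * (c' ⬝ᵥ c') - (φ c + A / 2 * (c ⬝ᵥ c))
      ≤ (fun k => fderiv ℝ φ c (Pi.single k 1) + A * c k) ⬝ᵥ (c' - c)
        + L / 2 * (∑ k, |c' k - c k|) ^ 2 := by
  set ψ' : (ι → ℝ) → (ι → ℝ) →L[ℝ] ℝ := fun x => fderiv ℝ φ x + (A / 2) •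
    ∑ k, (x k • ContinuousLinearMap.proj k + x k • ContinuousLinearMap.proj k)
  have hψ : ∀ x ∈ s, HasFDerivAt (fun x => φ x + A / 2 * ∑ k, x k * x k) (ψ' x) x :=
    fun x hx => (hφ x hx).hasFDerivAt.add (HasFDerivAt.const_mul
      (HasFDerivAt.fun_sum fun k _ => (hasFDerivAt_apply k x).mul (hasFDerivAt_apply k x)) _)
  have hψ' : ∀ x v : ι → ℝ,
      ψ' x v = (fun k => fderiv ℝ φ x (Pi.single k 1) + A * x k) ⬝ᵥ v := fun x v => by
    simp only [ψ', _root_.add_apply, _root_.smul_apply, _root_.sum_apply,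
      ContinuousLinearMap.apply_eq_sum_mul_apply_single (fderiv ℝ φ x) v]
    simp only [ContinuousLinearMap.proj_apply, smul_eq_mul, mul_sum, ← sum_add_distrib,
      dotProduct]
    exact sum_congr rfl fun k _ => by ring
  have := hs.image_sub_le_of_fderiv_sub_le hψ (l1Seminorm ι) (L := L) (fun x hx y hy => by
    rw [_root_.sub_apply, hψ', hψ', ← sub_dotProduct, l1Seminorm_apply, sq, ← mul_assoc]
    refine (dotProduct_le_iSup_abs_mul_sum_abs _ _).trans
      (mul_le_mul_of_nonneg_right ((iSup_congr fun k => ?_).trans_le (hsmooth x hx y hy))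
        (sum_nonneg fun k _ => abs_nonneg _))
    simp only [Pi.sub_apply]
    ring_nf) hc hc'
  simp only [hψ'] at this
  exact this

namespace Matrix.PosSemidef

variable {m n : Type*} [Fintype m] [Fintype n] {W : Matrix m m ℝ}

lemma sum_mul_dotProduct_nonneg (hW : W.PosSemidef) (v : m → n → ℝ) :
    0 ≤ ∑ i, ∑ j, W i j * (v i ⬝ᵥ v j) := by
  have hcol : ∀ k, 0 ≤ ∑ i, ∑ j, v i k * (W i j * v j k) := fun k => by
    simpa [dotProduct, mulVec, mul_sum] using hW.dotProduct_mulVec_nonneg fun i => v i k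
  calc (0 : ℝ) ≤ ∑ k, ∑ i, ∑ j, v i k * (W i j * v j k) := sum_nonneg fun k _ => hcol k
    _ = _ := by
      simp only [dotProduct, mul_sum]
      rw [sum_comm]
      refine sum_congr rfl fun i _ => ?_
      rw [sum_comm]
      exact sum_congr rfl fun j _ => sum_congr rfl fun k _ => by ring

-- Convexity of the quadratic form `x ↦ ∑ i j, W i j ⟨x i, x j⟩` of a symmetric PSD matrix.
lemma two_mul_sum_dotProduct_sub_le (hW : W.PosSemidef) (x y : m → n → ℝ) :
    2 * ∑ i, (∑ j, W i j • x j) ⬝ᵥ (y i - x i)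
      ≤ ∑ i, ∑ j, W i j * (y i ⬝ᵥ y j) - ∑ i, ∑ j, W i j * (x i ⬝ᵥ x j) := by
  have hsymm : ∀ i j, W j i = W i j := fun i j => by
    simpa using hW.isHermitian.apply i j
  have hcross : ∑ i, ∑ j, W i j * (x i ⬝ᵥ (y j - x j))
      = ∑ i, (∑ j, W i j • x j) ⬝ᵥ (y i - x i) := by
    rw [sum_comm]
    refine sum_congr rfl fun i _ => ?_
    rw [sum_dotProduct]
    exact sum_congr rfl fun j _ => by rw [smul_dotProduct, smul_eq_mul, hsymm]
  have hexpand : ∑ i, ∑ j, W i j * (y i ⬝ᵥ y j) - ∑ i, ∑ j, W i j * (x i ⬝ᵥ x j)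
      = 2 * ∑ i, ∑ j, W i j * (x i ⬝ᵥ (y j - x j))
        + ∑ i, ∑ j, W i j * ((y i - x i) ⬝ᵥ (y j - x j)) := by
    have hterm : ∀ i j, W i j * (y i ⬝ᵥ y j) - W i j * (x i ⬝ᵥ x j)
        = W i j * (x i ⬝ᵥ (y j - x j)) + W j i * (x j ⬝ᵥ (y i - x i))
          + W i j * ((y i - x i) ⬝ᵥ (y j - x j)) := fun i j => by
      rw [hsymm, dotProduct_comm (x j)]
      simp only [dotProduct_sub, sub_dotProduct]
      ring
    simp only [← sum_sub_distrib, hterm, sum_add_distrib]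
    rw [sum_comm (f := fun i j => W j i * (x j ⬝ᵥ (y i - x i)))]
    ring
  linarith [hW.sum_mul_dotProduct_nonneg fun i => y i - x i]

end Matrix.PosSemidef

def laplacianObjective {m κ : Type*} [Fintype m] [Fintype κ] (φ : m → (κ → ℝ) → ℝ)
    (lam : ℝ) (W : Matrix m m ℝ) (dg : m → ℝ) (c : m → κ → ℝ) : ℝ :=
  ∑ i, φ i (c i) + lam * (∑ i, dg i * (c i ⬝ᵥ c i) - ∑ i, ∑ j, W i j * (c i ⬝ᵥ c j))

lemma laplacianObjective_sub_le {m κ : Type*} [Fintype m] [Fintype κ] [DecidableEq κ]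
    {s : Set (κ → ℝ)} (hs : Convex ℝ s) {φ : m → (κ → ℝ) → ℝ}
    (hφ : ∀ i, ∀ c ∈ s, DifferentiableAt ℝ (φ i) c) {lam L : ℝ} (hlam : 0 ≤ lam)
    {W : Matrix m m ℝ} (hW : W.PosSemidef) {dg : m → ℝ}
    (hsmooth : ∀ i, ∀ c ∈ s, ∀ c' ∈ s,
      (⨆ k, |fderiv ℝ (φ i) c' (Pi.single k 1) - fderiv ℝ (φ i) c (Pi.single k 1)
        + 2 * lam * dg i * (c' k - c k)|) ≤ L * ∑ k, |c' k - c k|)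
    {x y : m → κ → ℝ} (hx : ∀ i, x i ∈ s) (hy : ∀ i, y i ∈ s) :
    laplacianObjective φ lam W dg y - laplacianObjective φ lam W dg x
      ≤ ∑ i, ((fun k => fderiv ℝ (φ i) (x i) (Pi.single k 1)
            + 2 * lam * (dg i * x i k - ∑ j, W i j * x j k)) ⬝ᵥ (y i - x i)
          + L / 2 * (∑ k, |y i k - x i k|) ^ 2) := by
  have hgrad : ∀ i, (fun k => fderiv ℝ (φ i) (x i) (Pi.single k 1)
      + 2 * lam * (dg i * x i k - ∑ j, W i j * x j k))
      = (fun k => fderiv ℝ (φ i) (x i) (Pi.single k 1) + 2 * lam * dg i * x i k)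
        - (2 * lam) • ∑ j, W i j • x j := fun i => by
    ext k
    simp only [Pi.sub_apply, Pi.smul_apply, Finset.sum_apply, smul_eq_mul]
    ring
  calc laplacianObjective φ lam W dg y - laplacianObjective φ lam W dg x
      = ∑ i, (φ i (y i) + 2 * lam * dg i / 2 * (y i ⬝ᵥ y i)
          - (φ i (x i) + 2 * lam * dg i / 2 * (x i ⬝ᵥ x i)))
        - lam * (∑ i, ∑ j, W i j * (y i ⬝ᵥ y j) - ∑ i, ∑ j, W i j * (x i ⬝ᵥ x j)) := by
        simp only [laplacianObjective, sum_sub_distrib, sum_add_distrib, mul_sub, mul_sum]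
        ring_nf
    _ ≤ ∑ i, ((fun k => fderiv ℝ (φ i) (x i) (Pi.single k 1) + 2 * lam * dg i * x i k)
            ⬝ᵥ (y i - x i) + L / 2 * (∑ k, |y i k - x i k|) ^ 2)
        - lam * (2 * ∑ i, (∑ j, W i j • x j) ⬝ᵥ (y i - x i)) := by
        gcongr with i
        exacts [add_half_mul_dotProduct_self_sub_le hs (hφ i) (hsmooth i) (hx i) (hy i),
          hW.two_mul_sum_dotProduct_sub_le x y]
    _ = _ := by
        simp only [hgrad, sub_dotProduct, smul_dotProduct, smul_eq_mul, sum_add_distrib,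
          sum_sub_distrib, ← mul_sum]
        ring

lemma neg_sq_div_add_half_mul_sq_le {η L : ℝ} (hη : 0 < η) (hLη : L * η < 2) (S : ℝ) :
    -S ^ 2 / η + L / 2 * S ^ 2 ≤ -(η / 2) * (1 - L / 2 * η) * (S / η) ^ 2 := by
  have hgap : -(η / 2) * (1 - L / 2 * η) * (S / η) ^ 2 - (-S ^ 2 / η + L / 2 * S ^ 2)
      = S ^ 2 * (2 - L * η) / (4 * η) := by
    field_simp
    ring
  rw [← sub_nonneg, hgap]
  exact div_nonneg (mul_nonneg (sq_nonneg S) (by linarith)) (by positivity)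

theorem stmt_13_general (K M : ℕ) (lam : ℝ) (hlam : 0 ≤ lam)
    (W : Matrix (Fin M) (Fin M) ℝ) (hW : W.PosSemidef)
    (dg : Fin M → ℝ)
    (φ : Fin M → (Fin K → ℝ) → ℝ) (L₂ : ℝ)
    (hdiff : ∀ i, ∀ c ∈ stdSimplex ℝ (Fin K), DifferentiableAt ℝ (φ i) c)
    (grad : Fin M → (Fin K → ℝ) → (Fin K → ℝ))
    (hgrad : ∀ i c, grad i c = fun k => fderiv ℝ (φ i) c (Pi.single k 1))
    (hsmooth : ∀ i, ∀ c ∈ stdSimplex ℝ (Fin K), ∀ c' ∈ stdSimplex ℝ (Fin K),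
      (⨆ k, |grad i c' k - grad i c k + 2 * lam * dg i * (c' k - c k)|)
        ≤ L₂ * ∑ k, |c' k - c k|)
    (F : (Fin M → Fin K → ℝ) → ℝ)
    (hF : ∀ c, F c = ∑ i, φ i (c i)
      + lam * (∑ i, dg i * (c i ⬝ᵥ c i) - ∑ i, ∑ j, W i j * (c i ⬝ᵥ c j)))
    (ct : Fin M → Fin K → ℝ) (hct : ∀ i, ct i ∈ stdSimplex ℝ (Fin K))
    (hctpos : ∀ i k, 0 < ct i k)
    (η : ℝ) (hη : 0 < η) (hη2 : η < 2 / L₂)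
    (gvec : Fin M → Fin K → ℝ)
    (hgvec : ∀ i k, gvec i k
      = grad i (ct i) k + 2 * lam * (dg i * ct i k - ∑ j, W i j * ct j k))
    (ct1 : Fin M → Fin K → ℝ)
    (hct1 : ∀ i k, ct1 i k
      = ct i k * Real.exp (-η * gvec i k)
        / ∑ l, ct i l * Real.exp (-η * gvec i l)) :
    F ct1 - F ct
      ≤ -(η / 2) * (1 - (L₂ / 2) * η)
          * ∑ i, (∑ k, |(ct i k - ct1 i k) / η|) ^ 2 := by
  obtain rfl : grad = fun i c k => fderiv ℝ (φ i) c (Pi.single k 1) := funext₂ hgrad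
  obtain rfl : F = laplacianObjective φ lam W dg := funext hF
  obtain rfl : gvec = fun i k => fderiv ℝ (φ i) (ct i) (Pi.single k 1)
      + 2 * lam * (dg i * ct i k - ∑ j, W i j * ct j k) := funext₂ hgvec
  have hstep : ∀ i, ct1 i = mirrorDescentStep (ct i) _ η := fun i => funext (hct1 i)
  have hct1mem : ∀ i, ct1 i ∈ stdSimplex ℝ (Fin K) := fun i => by
    rw [hstep]; exact mirrorDescentStep_mem_stdSimplex _ _ (hctpos i) (hct i).2
  have hLη : L₂ * η < 2 := by
    rcases le_or_gt L₂ 0 with hL | hL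
    · nlinarith
    · rwa [lt_div_iff₀ hL, mul_comm] at hη2
  calc _ ≤ _ := laplacianObjective_sub_le (convex_stdSimplex ℝ (Fin K)) hdiff hlam hW hsmooth
        hct hct1mem
    _ ≤ ∑ i, (-(∑ k, |ct1 i k - ct i k|) ^ 2 / η + L₂ / 2 * (∑ k, |ct1 i k - ct i k|) ^ 2) := by
        gcongr with i
        rw [hstep]
        exact dotProduct_mirrorDescentStep_sub_le _ _ (hctpos i) (hct i).2 hη
    _ ≤ _ := by
        rw [mul_sum]
        gcongr with i
        simp only [abs_div, abs_of_pos hη, abs_sub_comm (ct i _), ← sum_div]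
        exact neg_sq_div_add_half_mul_sq_le hη hLη _

/-- Membership-block descent bound (Lemma O2, exact-gradient case): one parallel
entropic mirror descent step on the Laplacian-regularized objective with step
size 0 < η < 2/L₂ yields
F(C^{t+1}) − F(Cᵗ) ≤ −(η/2)(1 − (L₂/2)η) Σᵢ ‖(cᵢᵗ − cᵢ^{t+1})/η‖₁². -/
theorem stmt_13 (K M : ℕ) (lam : ℝ) (hlam : 0 ≤ lam)
    (W : Matrix (Fin M) (Fin M) ℝ) (hW : W.PosSemidef)
    (dg : Fin M → ℝ) (hdg : ∀ i, dg i = ∑ j, W i j)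
    (φ : Fin M → (Fin K → ℝ) → ℝ) (L₂ : ℝ)
    (hdiff : ∀ i, ∀ c ∈ stdSimplex ℝ (Fin K), DifferentiableAt ℝ (φ i) c)
    (grad : Fin M → (Fin K → ℝ) → (Fin K → ℝ))
    (hgrad : ∀ i c, grad i c = fun k => fderiv ℝ (φ i) c (Pi.single k 1))
    (hsmooth : ∀ i, ∀ c ∈ stdSimplex ℝ (Fin K), ∀ c' ∈ stdSimplex ℝ (Fin K),
      (⨆ k, |grad i c' k - grad i c k + 2 * lam * dg i * (c' k - c k)|)
        ≤ L₂ * ∑ k, |c' k - c k|)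
    (F : (Fin M → Fin K → ℝ) → ℝ)
    (hF : ∀ c, F c = ∑ i, φ i (c i)
      + lam * (∑ i, dg i * (c i ⬝ᵥ c i) - ∑ i, ∑ j, W i j * (c i ⬝ᵥ c j)))
    (ct : Fin M → Fin K → ℝ) (hct : ∀ i, ct i ∈ stdSimplex ℝ (Fin K))
    (hctpos : ∀ i k, 0 < ct i k)
    (η : ℝ) (hη : 0 < η) (hη2 : η < 2 / L₂)
    (gvec : Fin M → Fin K → ℝ)
    (hgvec : ∀ i k, gvec i k
      = grad i (ct i) k + 2 * lam * (dg i * ct i k - ∑ j, W i j * ct j k))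
    (ct1 : Fin M → Fin K → ℝ)
    (hct1 : ∀ i k, ct1 i k
      = ct i k * Real.exp (-η * gvec i k)
        / ∑ l, ct i l * Real.exp (-η * gvec i l)) :
    F ct1 - F ct
      ≤ -(η / 2) * (1 - (L₂ / 2) * η)
          * ∑ i, (∑ k, |(ct i k - ct1 i k) / η|) ^ 2 :=
  stmt_13_general K M lam hlam W hW dg φ L₂ hdiff grad hgrad hsmooth F hF ct hct hctpos η hη hη2
    gvec hgvec ct1 hct1
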